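/- Let tsm be a time-stamping modulo M that weakly satisfies G, and suppose there is no pair (u,v) with (u,v) ∈ gtFr and (v,u) ∈ geqFr*. Then every path in the directed graph (V, geqFr) uses at most |V| edges from gtFr. -/
import Mathlib


open Finset

/-- A weighted constraint edge: `ts tgt - ts src ◁ wt` where ◁ is `<` if `strict` else `≤`. -/
structure WEdge where
  src : ℕ
  strict : Bool
  wt : ℤ
  tgt : ℕ
deriving DecidableEq

/-- `ts` satisfies the constraint of edge `e`. -/
def satEdge (ts : ℕ → ℝ) (e : WEdge) : Prop :=
  if e.strict then ts e.tgt - ts e.src < (e.wt : ℝ) else ts e.tgt - ts e.src ≤ (e.wt : ℝ)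

/-- `ts` realizes the linear weighted graph on vertices `{1,…,n}` with edge set `E`:
monotone w.r.t. the linear order and all difference constraints hold. -/
def Realizes (n : ℕ) (E : Finset WEdge) (ts : ℕ → ℝ) : Prop :=
  (∀ u v : ℕ, 1 ≤ u → u ≤ v → v ≤ n → ts u ≤ ts v) ∧ ∀ e ∈ E, satEdge ts e

/-- Integer parts of consecutive time-stamps differ by at least 0 and at most `M - 1`. -/
def SlowlyMonotone (M : ℤ) (n : ℕ) (ts : ℕ → ℝ) : Prop :=
  ∀ i : ℕ, 1 ≤ i → i < n → 0 ≤ ⌊ts (i + 1)⌋ - ⌊ts i⌋ ∧ ⌊ts (i + 1)⌋ - ⌊ts i⌋ ≤ M - 1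

/-- All edges of the graph have endpoints in `{1,…,n}`. -/
def InGraph (n : ℕ) (E : Finset WEdge) : Prop :=
  ∀ e ∈ E, 1 ≤ e.src ∧ e.src ≤ n ∧ 1 ≤ e.tgt ∧ e.tgt ≤ n

/-- `M` weight-bounded: all weights have absolute value at most `M - 1`. -/
def WtBounded (M : ℤ) (E : Finset WEdge) : Prop := ∀ e ∈ E, |e.wt| ≤ M - 1

/-- `dtsm(u,v) = (tsm v - tsm u) mod M`. -/
def dtsm (M : ℤ) (tsm : ℕ → ℤ) (u v : ℕ) : ℤ := (tsm v - tsm u) % M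

/-- `dtsm⁺(u,v)`, for `u ≤ v`: the cumulative sum of consecutive `dtsm`'s, capped at `M`. -/
def dtsmP (M : ℤ) (tsm : ℕ → ℤ) (u v : ℕ) : ℤ :=
  min M (∑ i ∈ Finset.Ico u v, dtsm M tsm i (i + 1))

/-- Antisymmetric extension of `dtsm⁺` to arbitrary pairs. -/
def dtsmE (M : ℤ) (tsm : ℕ → ℤ) (u v : ℕ) : ℤ :=
  if u ≤ v then dtsmP M tsm u v else - dtsmP M tsm v u

/-- `(u,v)` is `tsm`-big. -/
def TsmBig (M : ℤ) (tsm : ℕ → ℤ) (u v : ℕ) : Prop :=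
  ∃ w1 w2 : ℕ, u ≤ w1 ∧ w1 < w2 ∧ w2 ≤ v ∧ M ≤ dtsm M tsm u w1 + dtsm M tsm w1 w2

/-- `tsm` is a time-stamping modulo `M` on vertices `{1,…,n}`. -/
def TSM (M : ℤ) (n : ℕ) (tsm : ℕ → ℤ) : Prop :=
  ∀ v, 1 ≤ v → v ≤ n → 0 ≤ tsm v ∧ tsm v < M

/-- `tsm` weakly satisfies the graph (forward/backward conditions). -/
def WeaklySat (M : ℤ) (E : Finset WEdge) (tsm : ℕ → ℤ) : Prop :=
  ∀ e ∈ E,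
    (e.src ≤ e.tgt → ¬ TsmBig M tsm e.src e.tgt ∧ dtsm M tsm e.src e.tgt ≤ e.wt) ∧
    (e.tgt < e.src → TsmBig M tsm e.tgt e.src ∨ - e.wt ≤ dtsm M tsm e.tgt e.src)

/-- `(u,v) ∈ geqFr`: fractional part of `ts u` must be ≥ that of `ts v`. -/
def geqFr (M : ℤ) (tsm : ℕ → ℤ) (E : Finset WEdge) (u v : ℕ) : Prop :=
  (∃ e ∈ E, e.src = u ∧ e.tgt = v ∧ dtsmE M tsm u v = e.wt) ∨
  (v + 1 = u ∧ dtsmE M tsm u v = 0)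

/-- `(u,v) ∈ gtFr`: fractional part of `ts u` must be > that of `ts v`. -/
def gtFr (M : ℤ) (tsm : ℕ → ℤ) (E : Finset WEdge) (u v : ℕ) : Prop :=
  ∃ e ∈ E, e.strict = true ∧ e.src = u ∧ e.tgt = v ∧ dtsmE M tsm u v = e.wt

open Classical in
/-- Number of `gtFr` edges used by the path `p 0, p 1, …, p k`. -/
noncomputable def gtCount (M : ℤ) (tsm : ℕ → ℤ) (E : Finset WEdge) (k : ℕ) (p : ℕ → ℕ) : ℕ :=
  ((Finset.range k).filter (fun i => gtFr M tsm E (p i) (p (i + 1)))).card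

theorem path_gtCount_le_card (M : ℤ) (hM : 1 ≤ M) (n : ℕ) (E : Finset WEdge)
    (hG : InGraph n E) (hW : WtBounded M E) (tsm : ℕ → ℤ) (hT : TSM M n tsm)
    (hWS : WeaklySat M E tsm)
    (hnc : ¬ ∃ u v : ℕ, gtFr M tsm E u v ∧ Relation.ReflTransGen (geqFr M tsm E) v u) :
    ∀ (k : ℕ) (p : ℕ → ℕ), (∀ i < k, geqFr M tsm E (p i) (p (i + 1))) →
      gtCount M tsm E k p ≤ n := by
  classical
  intro k p hpath
  have hreach : ∀ a b, a ≤ b → b ≤ k →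
      Relation.ReflTransGen (geqFr M tsm E) (p a) (p b) := by
    intro a b hab hbk
    induction b, hab using Nat.le_induction with
    | base => exact Relation.ReflTransGen.refl
    | succ m hm ih =>
      exact (ih (Nat.le_of_succ_le hbk)).tail (hpath m (Nat.lt_of_succ_le hbk))
  unfold gtCount
  have hmem : ∀ i ∈ (Finset.range k).filter
      (fun i => gtFr M tsm E (p i) (p (i + 1))), p i ∈ Finset.Icc 1 n := by
    intro i hi
    rw [Finset.mem_filter] at hi
    obtain ⟨e, heE, _, hsrc, _, _⟩ := hi.2
    have := hG e heE
    rw [Finset.mem_Icc]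
    omega
  have hinj : Set.InjOn p ((Finset.range k).filter
      (fun i => gtFr M tsm E (p i) (p (i + 1)))) := by
    intro i hi j hj hij
    simp only [Finset.coe_filter, Set.mem_setOf_eq, Finset.mem_range] at hi hj
    by_contra hne
    rcases Nat.lt_or_ge i j with h | h
    · have hr := hreach (i + 1) j (by omega) (by omega)
      rw [← hij] at hr
      exact hnc ⟨p i, p (i + 1), hi.2, hr⟩
    · have h' : j < i := lt_of_le_of_ne h (Ne.symm hne)
      have hr := hreach (j + 1) i (by omega) (by omega)
      rw [hij] at hr
      exact hnc ⟨p j, p (j + 1), hj.2, hr⟩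
  calc ((Finset.range k).filter (fun i => gtFr M tsm E (p i) (p (i + 1)))).card
      ≤ (Finset.Icc 1 n).card := Finset.card_le_card_of_injOn p hmem hinj
    _ = n := by simp
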